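/- Lower bound on the smoothed class probability at a perturbed input (case ψ ≥ ψ̃): Let x, x̃ ∈ X, let z★ be a longest common subsequence of x and x̃ with L := |z★|, let ψ, ψ̃ ∈ (0,1) with ψ ≥ ψ̃, let f̄ : X → Y be any base classifier and y ∈ Y. Set μ := p_y(x; f̄, ψ) and W := μ − 1 + ψ^{|x|−L}, and let H★ := min{ h ∈ {0,…,L} : Σ_{i=0}^{h} B(L, ψ, i) ≥ W } (this set is nonempty since Σ_{i=0}^{L} B(L, ψ, i) = 1 ≥ W). Then p_y(x̃; f̄, ψ̃) ≥ (ψ̃^{|x̃|−L} / ψ^{|x|−L}) · ( Σ_{i=0}^{H★−1} B(L, ψ̃, i) + B(L, ψ̃, H★) · ⌊ (W − Σ_{j=0}^{H★−1} B(L, ψ, j)) / B(L, ψ, H★) ⌋_{C(L,H★)^{−1}} ). -/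

import Mathlib

/-!
Fix a copy of the common subsequence `z` (of length `L`) inside `x`. The deletion indicators of
`x` that delete everything outside that copy carry mass `ψ ^ (|x| - L)`, and on them the score of
`x` is `ψ ^ (|x| - L)` times the score of `z`; bounding the remaining indicators by their mass
gives `W ≤ ψ ^ (|x| - L) p_y(z; ψ)`, and the same embedding into `x̃` gives
`p_y(x̃; ψ̃) ≥ ψ̃ ^ (|x̃| - L) p_y(z; ψ̃)`. Grouping the indicators of `z` by the number of retained
tokens writes `p_y(z; ψ) = ∑ₖ τₖ B(L, ψ, k)` with weights `τₖ ∈ [0, 1]` independent of `ψ`.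
Since `k ↦ B(L, ψ̃, k) / B(L, ψ, k)` is nondecreasing for `ψ̃ ≤ ψ`, among weights with
`∑ₖ τₖ B(L, ψ, k) ≥ W` the mixture at `ψ̃` is smallest when the weight is packed onto the
smallest `k` (a Neyman–Pearson exchange), which is the bound; the gridded floor only lowers the
fractional weight at `H★`.
-/

/-- Apply a deletion indicator: keep the tokens at positions `i` with `ε i = true`, in order. -/
def applyDel {Ω : Type*} (x : List Ω) (ε : Fin x.length → Bool) : List Ω :=
  (List.finRange x.length).filterMap fun i => if ε i then some (x.get i) else none

/-- Number of retained tokens `|ε|`. -/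
def retained {n : ℕ} (ε : Fin n → Bool) : ℕ :=
  (Finset.univ.filter fun i => ε i = true).card

/-- `q_ψ(ε|x) = ψ^{|x|-|ε|} (1-ψ)^{|ε|}`. -/
noncomputable def qdel {Ω : Type*} (ψ : ℝ) (x : List Ω) (ε : Fin x.length → Bool) : ℝ :=
  ψ ^ (x.length - retained ε) * (1 - ψ) ^ (retained ε)

/-- The score `s_{f̄,ψ}(ε, x) = q_ψ(ε|x)·1[f̄(apply(x,ε)) = y]`. -/
noncomputable def score {Ω Y : Type*} [DecidableEq Y] (f : List Ω → Y) (y : Y) (ψ : ℝ)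
    (x : List Ω) (ε : Fin x.length → Bool) : ℝ :=
  qdel ψ x ε * (if f (applyDel x ε) = y then 1 else 0)

/-- The smoothed class probability `p_y(x; f̄, ψ) = Σ_{ε ∈ E(x)} s_{f̄,ψ}(ε, x)`. -/
noncomputable def smoothedProb {Ω Y : Type*} [DecidableEq Y] (f : List Ω → Y) (y : Y)
    (ψ : ℝ) (x : List Ω) : ℝ :=
  ∑ ε : Fin x.length → Bool, score f y ψ x ε

/-- `z` is a longest common subsequence of `x` and `x̃`. -/
def IsLCS {Ω : Type*} (z x xt : List Ω) : Prop :=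
  z.Sublist x ∧ z.Sublist xt ∧ ∀ w : List Ω, w.Sublist x → w.Sublist xt → w.length ≤ z.length

/-- The binomial pmf `B(n, p, k) = C(n,k)·(1−p)^k·p^{n−k}`. -/
noncomputable def binomPMF (n : ℕ) (p : ℝ) (k : ℕ) : ℝ :=
  (n.choose k : ℝ) * (1 - p) ^ k * p ^ (n - k)

/-- Gridded floor `⌊a⌋_v = v·⌊a/v⌋`. -/
noncomputable def gfloor (a v : ℝ) : ℝ := v * (⌊a / v⌋ : ℤ)

/-- Gridded ceiling `⌈a⌉_v = v·⌈a/v⌉`. -/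
noncomputable def gceil (a v : ℝ) : ℝ := v * (⌈a / v⌉ : ℤ)

open Finset

section Masks

variable {Ω Y : Type*}

lemma retained_le {n : ℕ} (ε : Fin n → Bool) : retained ε ≤ n :=
  (card_filter_le _ _).trans_eq (card_fin n)

lemma retained_cons {n : ℕ} (b : Bool) (ε : Fin n → Bool) :
    retained (Fin.cons b ε : Fin (n + 1) → Bool) = b.toNat + retained ε := by
  simp only [retained, card_filter, Fin.sum_univ_succ, Fin.cons_zero, Fin.cons_succ]
  cases b <;> rfl

lemma applyDel_cons (a : Ω) (x : List Ω) (b : Bool) (ε : Fin x.length → Bool) :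
    applyDel (a :: x) (Fin.cons b ε) = (if b then [a] else []) ++ applyDel x ε := by
  cases b <;>
  simp [applyDel, List.finRange_succ, List.filterMap_map]

lemma List.Sublist.exists_mask_embedding {z x : List Ω} (h : z.Sublist x) :
    ∃ Φ : (Fin z.length → Bool) → (Fin x.length → Bool), Function.Injective Φ ∧
      (∀ T, retained (Φ T) = retained T) ∧ ∀ T, applyDel x (Φ T) = applyDel z T := by
  induction h with
  | slnil => exact ⟨id, Function.injective_id, fun _ => rfl, fun _ => rfl⟩
  | cons a _ ih =>
    obtain ⟨Φ, hinj, hret, happ⟩ := ih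
    refine ⟨fun T => Fin.cons false (Φ T), fun T T' h => hinj (Fin.cons_right_injective _ h),
      fun T => ?_, fun T => ?_⟩
    · simp [retained_cons, hret]
    · simp [applyDel_cons, happ]
  | cons_cons a _ ih =>
    obtain ⟨Φ, hinj, hret, happ⟩ := ih
    refine ⟨fun T => Fin.cons (T 0) (Φ (Fin.tail T)), fun T T' h => ?_, fun T => ?_, fun T => ?_⟩
    · obtain ⟨h0, htail⟩ := Fin.cons_inj.mp h
      exact Fin.cons_self_tail T ▸ Fin.cons_self_tail T' ▸ by rw [h0, hinj htail]
    · conv_rhs => rw [← Fin.cons_self_tail T, retained_cons]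
      rw [retained_cons, hret]
    · conv_rhs => rw [← Fin.cons_self_tail T, applyDel_cons]
      rw [applyDel_cons, happ]

lemma sum_qdel (ψ : ℝ) (x : List Ω) : ∑ ε, qdel ψ x ε = 1 := by
  have hprod : ∀ ε : Fin x.length → Bool, qdel ψ x ε = ∏ i, if ε i then 1 - ψ else ψ := by
    intro ε
    have hcompl : #{i | ¬ε i = true} = x.length - retained ε := by
      have := card_filter_add_card_filter_not (s := univ) (p := fun i => ε i = true)
      simp only [card_univ, Fintype.card_fin] at this
      rw [retained]
      omega
    rw [prod_ite, prod_const, prod_const, hcompl, qdel, mul_comm, retained]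
  simp_rw [hprod, ← Fintype.prod_sum (fun (_ : Fin x.length) (b : Bool) => if b then 1 - ψ else ψ)]
  simp

lemma qdel_nonneg {ψ : ℝ} (hψ : ψ ∈ Set.Icc (0 : ℝ) 1) (x : List Ω) (ε : Fin x.length → Bool) :
    0 ≤ qdel ψ x ε :=
  mul_nonneg (pow_nonneg hψ.1 _) (pow_nonneg (sub_nonneg.2 hψ.2) _)

variable [DecidableEq Y] (f : List Ω → Y) (y : Y)

lemma score_nonneg {ψ : ℝ} (hψ : ψ ∈ Set.Icc (0 : ℝ) 1) (x : List Ω) (ε : Fin x.length → Bool) :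
    0 ≤ score f y ψ x ε :=
  mul_nonneg (qdel_nonneg hψ x ε) (by split_ifs <;> norm_num)

lemma score_le_qdel {ψ : ℝ} (hψ : ψ ∈ Set.Icc (0 : ℝ) 1) (x : List Ω) (ε : Fin x.length → Bool) :
    score f y ψ x ε ≤ qdel ψ x ε :=
  mul_le_of_le_one_right (qdel_nonneg hψ x ε) (by split_ifs <;> norm_num)

lemma smoothedProb_le_one {ψ : ℝ} (hψ : ψ ∈ Set.Icc (0 : ℝ) 1) (x : List Ω) :
    smoothedProb f y ψ x ≤ 1 :=
  (sum_le_sum fun ε _ => score_le_qdel f y hψ x ε).trans_eq (sum_qdel ψ x)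

end Masks

section Sublist

variable {Ω Y : Type*} [DecidableEq Y] (f : List Ω → Y) (y : Y) {ψ : ℝ} {z x : List Ω}

lemma qdel_eq_pow_mul_qdel (hzx : z.length ≤ x.length) {ε : Fin x.length → Bool}
    {T : Fin z.length → Bool} (h : retained ε = retained T) :
    qdel ψ x ε = ψ ^ (x.length - z.length) * qdel ψ z T := by
  have hT := retained_le T
  rw [qdel, qdel, h, ← mul_assoc, ← pow_add]
  congr 2
  omega

/-- `s` is the set of indicators of `x` deleting everything outside a copy of `z`. -/
lemma List.Sublist.exists_sum_score_eq (h : z.Sublist x) :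
    ∃ s : Finset (Fin x.length → Bool),
      ∑ ε ∈ s, score f y ψ x ε = ψ ^ (x.length - z.length) * smoothedProb f y ψ z ∧
      ∑ ε ∈ s, qdel ψ x ε = ψ ^ (x.length - z.length) := by
  obtain ⟨Φ, hinj, hret, happ⟩ := h.exists_mask_embedding
  have hq : ∀ T, qdel ψ x (Φ T) = ψ ^ (x.length - z.length) * qdel ψ z T :=
    fun T => qdel_eq_pow_mul_qdel h.length_le (hret T)
  refine ⟨univ.image Φ, ?_, ?_⟩
  · simp only [sum_image hinj.injOn, smoothedProb, mul_sum, score, hq, happ, mul_assoc]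
  · rw [sum_image hinj.injOn]
    simp only [hq, ← mul_sum, sum_qdel, mul_one]

lemma List.Sublist.pow_mul_smoothedProb_le (h : z.Sublist x) (hψ : ψ ∈ Set.Icc (0 : ℝ) 1) :
    ψ ^ (x.length - z.length) * smoothedProb f y ψ z ≤ smoothedProb f y ψ x := by
  obtain ⟨s, hscore, -⟩ := h.exists_sum_score_eq f y (ψ := ψ)
  exact hscore ▸ sum_le_sum_of_subset_of_nonneg (subset_univ s)
    fun ε _ _ => score_nonneg f y hψ x ε

lemma List.Sublist.smoothedProb_le (h : z.Sublist x) (hψ : ψ ∈ Set.Icc (0 : ℝ) 1) :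
    smoothedProb f y ψ x ≤
      ψ ^ (x.length - z.length) * smoothedProb f y ψ z + (1 - ψ ^ (x.length - z.length)) := by
  obtain ⟨s, hscore, hqdel⟩ := h.exists_sum_score_eq f y (ψ := ψ)
  have hrest : ∑ ε ∈ univ \ s, score f y ψ x ε ≤ 1 - ψ ^ (x.length - z.length) := by
    rw [← hqdel, ← sum_qdel ψ x, ← sum_sdiff (subset_univ s), add_sub_cancel_right]
    exact Finset.sum_le_sum fun ε _ => score_le_qdel f y hψ x ε
  rw [smoothedProb, ← sum_sdiff (subset_univ s), hscore, add_comm]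
  gcongr

end Sublist

section Mixture

variable {Ω Y : Type*} [DecidableEq Y] (f : List Ω → Y) (y : Y)

lemma card_filter_retained_le {n : ℕ} (k : ℕ) (P : (Fin n → Bool) → Prop) [DecidablePred P] :
    #{T : Fin n → Bool | retained T = k ∧ P T} ≤ n.choose k := by
  calc #{T : Fin n → Bool | retained T = k ∧ P T}
      ≤ #(powersetCard k (univ : Finset (Fin n))) := by
        refine card_le_card_of_injOn (fun T => ({i | T i} : Finset (Fin n))) (fun T hT => ?_)
          fun T _ T' _ h => ?_
        · simp only [coe_filter, mem_univ, true_and, Set.mem_ofPred_eq] at hT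
          simpa [mem_powersetCard, retained] using hT.1
        · funext i
          simpa using congrArg (i ∈ ·) h
    _ = n.choose k := by simp

/-- `τ k` is the fraction of the `k`-token subsequences of `z` that `f` classifies as `y`. -/
lemma exists_smoothedProb_eq_sum_binomPMF (z : List Ω) :
    ∃ τ : ℕ → ℝ, (∀ k, 0 ≤ τ k ∧ τ k ≤ 1) ∧
      ∀ ψ, smoothedProb f y ψ z = ∑ k ∈ range (z.length + 1), τ k * binomPMF z.length ψ k := by
  set n := z.length
  set a : ℕ → ℕ := fun k => #{T : Fin n → Bool | retained T = k ∧ f (applyDel z T) = y}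
  refine ⟨fun k => a k / n.choose k, fun k => ⟨by positivity, div_le_one_of_le₀ (by
    exact_mod_cast card_filter_retained_le k _) (Nat.cast_nonneg _)⟩, fun ψ => ?_⟩
  rw [smoothedProb, ← sum_fiberwise_of_maps_to (g := retained) (t := range (n + 1))
    fun T _ => mem_range_succ_iff.2 (retained_le T)]
  refine sum_congr rfl fun k hk => ?_
  have hchoose : (n.choose k : ℝ) ≠ 0 := by
    exact_mod_cast (Nat.choose_pos (mem_range_succ_iff.1 hk)).ne'
  calc ∑ T with retained T = k, score f y ψ z T
      = ∑ T with retained T = k, if f (applyDel z T) = y then ψ ^ (n - k) * (1 - ψ) ^ k else 0 :=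
        sum_congr rfl fun T hT => by
          rw [score, qdel, (mem_filter.1 hT).2, mul_ite, mul_one, mul_zero]
    _ = a k * (ψ ^ (n - k) * (1 - ψ) ^ k) := by
        rw [sum_ite, sum_const_zero, add_zero, sum_const, filter_filter, nsmul_eq_mul]
    _ = a k / n.choose k * binomPMF n ψ k := by
        rw [binomPMF]
        field_simp

end Mixture

section Binomial

lemma binomPMF_nonneg {ψ : ℝ} (hψ : ψ ∈ Set.Icc (0 : ℝ) 1) (L k : ℕ) : 0 ≤ binomPMF L ψ k := by
  have := sub_nonneg.2 hψ.2
  have := hψ.1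
  unfold binomPMF
  positivity

lemma binomPMF_pos {ψ : ℝ} (hψ : ψ ∈ Set.Ioo (0 : ℝ) 1) {L k : ℕ} (hk : k ≤ L) :
    0 < binomPMF L ψ k := by
  have := sub_pos.2 hψ.2
  have := hψ.1
  have : (0 : ℝ) < L.choose k := by exact_mod_cast Nat.choose_pos hk
  unfold binomPMF
  positivity

lemma sum_binomPMF (L : ℕ) (ψ : ℝ) : ∑ k ∈ range (L + 1), binomPMF L ψ k = 1 := by
  simp_rw [binomPMF, mul_comm (L.choose _ : ℝ), mul_assoc, mul_comm (L.choose _ : ℝ), ← mul_assoc,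
    ← add_pow, sub_add_cancel, one_pow]

/-- Monotone likelihood ratio of the binomial family. -/
lemma binomPMF_mul_le_mul {ψ ψt : ℝ} (hψ : ψ ∈ Set.Icc (0 : ℝ) 1) (hψt : ψt ∈ Set.Icc (0 : ℝ) 1)
    (hle : ψt ≤ ψ) {L k h : ℕ} (hkh : k ≤ h) (hhL : h ≤ L) :
    binomPMF L ψt k * binomPMF L ψ h ≤ binomPMF L ψt h * binomPMF L ψ k := by
  obtain ⟨d, rfl⟩ := Nat.exists_eq_add_of_le hkh
  obtain ⟨hψ0, hψ1⟩ := hψ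
  obtain ⟨hψt0, hψt1⟩ := hψt
  have hstep : ψt ^ d * (1 - ψ) ^ d ≤ (1 - ψt) ^ d * ψ ^ d := by
    rw [← mul_pow, ← mul_pow]
    exact pow_le_pow_left₀ (by nlinarith) (by nlinarith) d
  have hcommon : 0 ≤ (L.choose k : ℝ) * L.choose (k + d) * (1 - ψt) ^ k * ψt ^ (L - (k + d)) *
      (1 - ψ) ^ k * ψ ^ (L - (k + d)) := by
    have := sub_nonneg.2 hψ1
    have := sub_nonneg.2 hψt1
    positivity
  unfold binomPMF
  rw [show L - k = L - (k + d) + d by omega]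
  simp only [pow_add]
  nlinarith [mul_le_mul_of_nonneg_left hstep hcommon]

lemma sum_binomPMF_add_mul_le_of_le {ψ ψt : ℝ} (hψ : ψ ∈ Set.Ioo (0 : ℝ) 1)
    (hψt : ψt ∈ Set.Icc (0 : ℝ) 1) (hle : ψt ≤ ψ) {L H : ℕ} (hHL : H ≤ L) {τ : ℕ → ℝ}
    (hτ : ∀ k, 0 ≤ τ k ∧ τ k ≤ 1) {g : ℝ}
    (hg : ∑ i ∈ range H, binomPMF L ψ i + g * binomPMF L ψ H ≤
      ∑ k ∈ range (L + 1), τ k * binomPMF L ψ k) :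
    ∑ i ∈ range H, binomPMF L ψt i + g * binomPMF L ψt H ≤
      ∑ k ∈ range (L + 1), τ k * binomPMF L ψt k := by
  set σ : ℕ → ℝ := fun k => if k < H then 1 else if k = H then g else 0
  have hσ : ∀ B : ℕ → ℝ,
      ∑ k ∈ range (L + 1), σ k * B k = ∑ i ∈ range H, B i + g * B H := by
    intro B
    have hlow : ∑ k ∈ range H, σ k * B k = ∑ i ∈ range H, B i :=
      sum_congr rfl fun k hk => by simp [σ, mem_range.1 hk]
    have hhigh : ∑ k ∈ Ico (H + 1) (L + 1), σ k * B k = 0 :=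
      sum_eq_zero fun k hk => by
        have := (mem_Ico.1 hk).1
        simp [σ, show ¬k < H by omega, show k ≠ H by omega]
    rw [← sum_range_add_sum_Ico _ (Nat.succ_le_succ hHL), hhigh, add_zero, sum_range_succ, hlow]
    simp [σ]
  -- `τ - σ` is `≤ 0` below `H` and `≥ 0` above `H`, like the likelihood-ratio difference.
  have hterm : ∀ k ∈ range (L + 1), 0 ≤ (τ k - σ k) *
      (binomPMF L ψt k * binomPMF L ψ H - binomPMF L ψt H * binomPMF L ψ k) := by
    intro k hk
    have hψI := Set.Ioo_subset_Icc_self hψ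
    rcases lt_trichotomy k H with hlt | rfl | hgt
    · exact mul_nonneg_of_nonpos_of_nonpos (by simp [σ, hlt, (hτ k).2])
        (sub_nonpos.2 (binomPMF_mul_le_mul hψI hψt hle hlt.le hHL))
    · simp
    · exact mul_nonneg (by simp [σ, hgt.ne', hgt.not_gt, (hτ k).1])
        (sub_nonneg.2 (binomPMF_mul_le_mul hψI hψt hle hgt.le (mem_range_succ_iff.1 hk)))
  have hexpand : ∑ k ∈ range (L + 1), (τ k - σ k) *
      (binomPMF L ψt k * binomPMF L ψ H - binomPMF L ψt H * binomPMF L ψ k) =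
      binomPMF L ψ H * (∑ k ∈ range (L + 1), τ k * binomPMF L ψt k -
        ∑ k ∈ range (L + 1), σ k * binomPMF L ψt k) -
      binomPMF L ψt H * (∑ k ∈ range (L + 1), τ k * binomPMF L ψ k -
        ∑ k ∈ range (L + 1), σ k * binomPMF L ψ k) := by
    simp only [← sum_sub_distrib, mul_sum]
    exact sum_congr rfl fun k _ => by ring
  have hB := binomPMF_pos hψ hHL
  have hBt := binomPMF_nonneg hψt L H
  rw [← hσ] at hg ⊢
  have := sum_nonneg hterm
  rw [hexpand] at this
  nlinarith [mul_nonneg hBt (sub_nonneg.2 hg)]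

lemma gfloor_le {a v : ℝ} (hv : 0 < v) : gfloor a v ≤ a := by
  rw [gfloor, ← le_div_iff₀' hv]
  exact Int.floor_le _

end Binomial

/-- lower bound on the smoothed class probability at a perturbed input,
case `ψ ≥ ψ̃`. -/
theorem stmt11 {Ω Y : Type*} [DecidableEq Y] (x xt zs : List Ω)
    (hz : IsLCS zs x xt) (L : ℕ) (hL : L = zs.length)
    (ψ ψt : ℝ) (hψ : ψ ∈ Set.Ioo (0 : ℝ) 1) (hψt : ψt ∈ Set.Ioo (0 : ℝ) 1)
    (hge : ψ ≥ ψt)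
    (f : List Ω → Y) (y : Y)
    (μ W : ℝ) (hμ : μ = smoothedProb f y ψ x)
    (hW : W = μ - 1 + ψ ^ (x.length - L))
    (H : ℕ)
    (hH : H = sInf {h | h ≤ L ∧ W ≤ ∑ i ∈ Finset.range (h + 1), binomPMF L ψ i}) :
    smoothedProb f y ψt xt ≥
      ψt ^ (xt.length - L) / ψ ^ (x.length - L) *
        (∑ i ∈ Finset.range H, binomPMF L ψt i +
          binomPMF L ψt H *
            gfloor ((W - ∑ j ∈ Finset.range H, binomPMF L ψ j) / binomPMF L ψ H)
              ((L.choose H : ℝ)⁻¹)) := by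
  obtain ⟨hzx, hzxt, -⟩ := hz
  subst hL hμ
  have hψI := Set.Ioo_subset_Icc_self hψ
  have hψtI := Set.Ioo_subset_Icc_self hψt
  obtain ⟨τ, hτ, hmix⟩ := exists_smoothedProb_eq_sum_binomPMF f y zs
  set c := ψ ^ (x.length - zs.length)
  have hc : 0 < c ∧ c ≤ 1 := ⟨pow_pos hψ.1 _, pow_le_one₀ hψ.1.le hψ.2.le⟩
  have hWle : W ≤ ∑ k ∈ range (zs.length + 1), c * τ k * binomPMF zs.length ψ k := by
    simp_rw [mul_assoc, ← mul_sum, ← hmix]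
    linarith [hzx.smoothedProb_le f y hψI]
  have hHL : H ≤ zs.length := by
    refine hH ▸ Nat.sInf_le ⟨le_rfl, ?_⟩
    linarith [sum_binomPMF zs.length ψ, smoothedProb_le_one f y hψI x]
  have hB := binomPMF_pos hψ hHL
  have hg : ∑ i ∈ range H, binomPMF zs.length ψ i +
      gfloor ((W - ∑ j ∈ range H, binomPMF zs.length ψ j) / binomPMF zs.length ψ H)
        ((zs.length.choose H : ℝ)⁻¹) * binomPMF zs.length ψ H ≤
      ∑ k ∈ range (zs.length + 1), c * τ k * binomPMF zs.length ψ k := by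
    have := gfloor_le (a := (W - ∑ j ∈ range H, binomPMF zs.length ψ j) / binomPMF zs.length ψ H)
      (inv_pos.2 (Nat.cast_pos.2 (Nat.choose_pos hHL)))
    calc _ ≤ ∑ i ∈ range H, binomPMF zs.length ψ i +
          (W - ∑ j ∈ range H, binomPMF zs.length ψ j) / binomPMF zs.length ψ H *
            binomPMF zs.length ψ H := by gcongr
      _ = W := by field_simp; ring
      _ ≤ _ := hWle
  have hcτ : ∀ k, 0 ≤ c * τ k ∧ c * τ k ≤ 1 := fun k =>
    ⟨mul_nonneg hc.1.le (hτ k).1, mul_le_one₀ hc.2 (hτ k).1 (hτ k).2⟩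
  have hmain := sum_binomPMF_add_mul_le_of_le hψ hψtI hge hHL hcτ hg
  calc ψt ^ (xt.length - zs.length) / c * _
      ≤ ψt ^ (xt.length - zs.length) / c *
          ∑ k ∈ range (zs.length + 1), c * τ k * binomPMF zs.length ψt k := by
        rw [mul_comm (binomPMF _ _ _)]
        exact mul_le_mul_of_nonneg_left hmain (div_nonneg (pow_nonneg hψt.1.le _) hc.1.le)
    _ = ψt ^ (xt.length - zs.length) * smoothedProb f y ψt zs := by
        simp_rw [hmix, mul_assoc, ← mul_sum]
        field_simp [hc.1.ne']
    _ ≤ smoothedProb f y ψt xt := hzxt.pow_mul_smoothedProb_le f y hψtI
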